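/- arXiv:1810.01087 — 5 statements merged into one kernel-verified Lean document; each statement's English description precedes it below -/
import Mathlib

section
/- For every m ≥ 1 and every real z ≥ 0, one has (z^m - 1)^2 ≥ (1/(m+1)) · (z^(m+1) - (m+1)·z + m). -/
theorem pme_elementary_ineq (m z : ℝ) (hm : 1 ≤ m) (hz : 0 ≤ z) :
    (z ^ m - 1) ^ 2 ≥ (1 / (m + 1)) * (z ^ (m + 1) - (m + 1) * z + m) := by
  have hm1 : (0:ℝ) < m + 1 := by linarith
  rcases eq_or_lt_of_le hz with hz0 | hz0
  · -- z = 0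
    rw [← hz0]
    rw [Real.zero_rpow (by linarith : m ≠ 0), Real.zero_rpow (by linarith : m + 1 ≠ 0)]
    rw [ge_iff_le, div_mul_eq_mul_div, div_le_iff₀ hm1]
    nlinarith
  · set a := z ^ m with ha
    have ha0 : 0 < a := Real.rpow_pos_of_pos hz0 m
    have hb : z ^ (m + 1) = a * z := by
      rw [Real.rpow_add hz0, Real.rpow_one, ha]
    -- F1 : Bernoulli at 1
    have hF1 : 1 + m * (z - 1) ≤ a := by
      have := one_add_mul_self_le_rpow_one_add (s := z - 1) (by linarith) hm
      simpa using this
    -- F2 : tangent at z, from Bernoulli at 1/z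
    have hF2 : z * (a - 1) ≤ m * a * (z - 1) := by
      have hinv : (0:ℝ) < 1 / z := by positivity
      have h1 : 1 + m * (1/z - 1) ≤ (1/z) ^ m := by
        have := one_add_mul_self_le_rpow_one_add (s := 1/z - 1) (by linarith) hm
        simpa using this
      have h2 : (1/z : ℝ) ^ m = 1 / a := by
        rw [ha, one_div, one_div, ← Real.inv_rpow (le_of_lt hz0)]
      rw [h2] at h1
      have h3 : (1 + m * (1/z - 1)) * (a * z) ≤ (1 / a) * (a * z) :=
        mul_le_mul_of_nonneg_right h1 (by positivity)
      have hz' : z ≠ 0 := ne_of_gt hz0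
      have ha' : a ≠ 0 := ne_of_gt ha0
      have e1 : (1 + m * (1/z - 1)) * (a * z) = a * z + m * a * (1 - z) := by
        field_simp
      have e2 : (1 / a) * (a * z) = z := by field_simp
      rw [e1, e2] at h3
      nlinarith [h3]
    rw [ge_iff_le, div_mul_eq_mul_div, div_le_iff₀ hm1, hb]
    rcases le_total z 1 with hle | hge
    · -- z ≤ 1 : a ≤ z
      have hF3 : a ≤ z := by
        have := Real.rpow_le_rpow_of_exponent_ge hz0 hle hm
        simpa using this
      have ha1 : a ≤ 1 := le_trans hF3 hle
      have h5 : 0 ≤ (1 - a) * (m * (z - 1) - (m + 1) * (a - 1)) := by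
        apply mul_nonneg (by linarith)
        nlinarith [mul_nonneg (by linarith : (0:ℝ) ≤ m) (by linarith : (0:ℝ) ≤ z - a)]
      nlinarith [hF2, h5, sq_nonneg (a - 1)]
    · -- 1 ≤ z : z ≤ a
      have hF3 : z ≤ a := by
        have := Real.rpow_le_rpow_of_exponent_le hge hm
        simpa using this
      have h6 : 0 ≤ (a - 1) ^ 2 * ((m + 1) * a - z) := by
        apply mul_nonneg (sq_nonneg _)
        nlinarith
      nlinarith [h6, hF2, ha0, mul_pos ha0 ha0]
end

section
/- For every real m ≥ 1 and every real z ≥ 0, one has |z - 1|^(m+1) ≤ z^(m+1) - (m+1)·z + m. -/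
lemma pme_rpow_superadd {x y p : ℝ} (hx : 0 ≤ x) (hy : 0 ≤ y) (hp : 1 ≤ p) :
    x ^ p + y ^ p ≤ (x + y) ^ p := by
  have h := NNReal.add_rpow_le_rpow_add x.toNNReal y.toNNReal hp
  have h' := (NNReal.coe_le_coe).2 h
  simpa [NNReal.coe_rpow, Real.coe_toNNReal x hx, Real.coe_toNNReal y hy] using h'

lemma pme_hasDerivAt_aux {p : ℝ} (hp : 1 ≤ p) (c : ℝ) (x : ℝ) :
    HasDerivAt (fun t : ℝ => (t - c) ^ p) (p * (x - c) ^ (p - 1)) x := by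
  have hbase : HasDerivAt (fun t : ℝ => t - c) 1 x := by
    simpa using (hasDerivAt_id x).sub_const c
  have houter := Real.hasDerivAt_rpow_const (x := x - c) (p := p) (Or.inr hp)
  simpa using (show HasDerivAt (fun t : ℝ => (t - c) ^ p) (p * (x - c) ^ (p - 1) * 1) x from
    by exact houter.comp x hbase)

lemma pme_hasDerivAt_aux' {p : ℝ} (hp : 1 ≤ p) (x : ℝ) :
    HasDerivAt (fun t : ℝ => (1 - t) ^ p) (-(p * (1 - x) ^ (p - 1))) x := by
  have hbase : HasDerivAt (fun t : ℝ => 1 - t) (-1) x := by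
    simpa using (show HasDerivAt (fun t : ℝ => 1 - t) (0 - 1) x from
      (hasDerivAt_const x (1 : ℝ)).sub (hasDerivAt_id x))
  have houter := Real.hasDerivAt_rpow_const (x := 1 - x) (p := p) (Or.inr hp)
  have : HasDerivAt (fun t : ℝ => (1 - t) ^ p) (p * (1 - x) ^ (p - 1) * -1) x :=
    houter.comp x hbase
  convert this using 1
  ring

theorem pme_Lm1_ineq (m z : ℝ) (hm : 1 ≤ m) (hz : 0 ≤ z) :
    |z - 1| ^ (m + 1) ≤ z ^ (m + 1) - (m + 1) * z + m := by
  have hp : (1 : ℝ) ≤ m + 1 := by linarith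
  have hpm : m + 1 - 1 = m := by ring
  have hmpos : (0 : ℝ) < m + 1 := by linarith
  rcases le_or_gt z 1 with h1 | h1
  · -- case 0 ≤ z ≤ 1 : G antitone on [0,1]
    have habs : |z - 1| = 1 - z := by rw [abs_of_nonpos (by linarith)]; ring
    rw [habs]
    set G : ℝ → ℝ := fun x => x ^ (m + 1) - (1 - x) ^ (m + 1) - (m + 1) * x + m with hGdef
    have hderiv : ∀ x : ℝ,
        HasDerivAt G ((m + 1) * x ^ m + (m + 1) * (1 - x) ^ m - (m + 1)) x := by
      intro x
      have h1' : HasDerivAt (fun t : ℝ => t ^ (m + 1)) ((m + 1) * x ^ m) x := by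
        have := Real.hasDerivAt_rpow_const (x := x) (p := m + 1) (Or.inr hp)
        rwa [hpm] at this
      have h2' := pme_hasDerivAt_aux' hp x
      rw [hpm] at h2'
      have h3' : HasDerivAt (fun t : ℝ => (m + 1) * t) (m + 1) x := by
        simpa using (hasDerivAt_id x).const_mul (m + 1)
      have : HasDerivAt G ((m + 1) * x ^ m - -((m + 1) * (1 - x) ^ m) - (m + 1)) x :=
        ((h1'.sub h2').sub h3').add_const m
      convert this using 1
      ring
    have hanti : AntitoneOn G (Set.Icc 0 1) := by
      apply antitoneOn_of_deriv_nonpos (convex_Icc 0 1)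
      · exact fun x _ => (hderiv x).continuousAt.continuousWithinAt
      · intro x _
        exact (hderiv x).differentiableAt.differentiableWithinAt
      · intro x hx
        rw [interior_Icc] at hx
        rw [(hderiv x).deriv]
        have hsup : x ^ m + (1 - x) ^ m ≤ 1 := by
          have := pme_rpow_superadd (x := x) (y := 1 - x) (p := m)
            hx.1.le (by linarith [hx.2]) hm
          simpa using this
        nlinarith
    have hG1 : G 1 = 0 := by
      simp only [hGdef]
      rw [Real.one_rpow, sub_self, Real.zero_rpow (by positivity)]
      ring
    have := hanti ⟨hz, h1⟩ (Set.mem_Icc.mpr ⟨zero_le_one, le_refl 1⟩) h1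
    rw [hG1] at this
    simp only [hGdef] at this
    linarith
  · -- case 1 ≤ z : F monotone on [1,∞)
    have habs : |z - 1| = z - 1 := abs_of_nonneg (by linarith)
    rw [habs]
    set F : ℝ → ℝ := fun x => x ^ (m + 1) - (x - 1) ^ (m + 1) - (m + 1) * x + m with hFdef
    have hderiv : ∀ x : ℝ,
        HasDerivAt F ((m + 1) * x ^ m - (m + 1) * (x - 1) ^ m - (m + 1)) x := by
      intro x
      have h1' : HasDerivAt (fun t : ℝ => t ^ (m + 1)) ((m + 1) * x ^ m) x := by
        have := Real.hasDerivAt_rpow_const (x := x) (p := m + 1) (Or.inr hp)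
        rwa [hpm] at this
      have h2' := pme_hasDerivAt_aux hp 1 x
      rw [hpm] at h2'
      have h3' : HasDerivAt (fun t : ℝ => (m + 1) * t) (m + 1) x := by
        simpa using (hasDerivAt_id x).const_mul (m + 1)
      exact ((h1'.sub h2').sub h3').add_const m
    have hmono : MonotoneOn F (Set.Ici 1) := by
      apply monotoneOn_of_deriv_nonneg (convex_Ici 1)
      · exact fun x _ => (hderiv x).continuousAt.continuousWithinAt
      · intro x _
        exact (hderiv x).differentiableAt.differentiableWithinAt
      · intro x hx
        rw [interior_Ici] at hx
        rw [(hderiv x).deriv]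
        have hsup : (x - 1) ^ m + 1 ≤ x ^ m := by
          have := pme_rpow_superadd (x := x - 1) (y := 1) (p := m)
            (by linarith [Set.mem_Ioi.mp hx]) zero_le_one hm
          simpa using this
        nlinarith
    have hF1 : F 1 = 0 := by
      simp only [hFdef]
      rw [Real.one_rpow, sub_self, Real.zero_rpow (by positivity)]
      ring
    have := hmono (Set.mem_Ici.mpr (le_refl 1)) (Set.mem_Ici.mpr h1.le) h1.le
    rw [hF1] at this
    simp only [hFdef] at this
    linarith
end

section
/- For any convex differentiable φ : ℝ → ℝ, any reals h_K, h_L, any F ∈ ℝ, with F⁺ = max(F,0) and F⁻ = max(-F,0), and with the φ-mean M^φ(h_K,h_L) = (ψ(h_K) - ψ(h_L))/(φ'(h_K) - φ'(h_L)) where ψ(s) = sφ'(s) - φ(s) (set M^φ(s,s) = s), the quantities F⁺·(M^φ(h_K,h_L) - h_K)·(φ'(h_L) - φ'(h_K)) and F⁻·(h_L - M^φ(h_K,h_L))·(φ'(h_L) - φ'(h_K)) are both nonnegative. -/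
noncomputable def phiMean (φ : ℝ → ℝ) (s t : ℝ) : ℝ :=
  if s = t then s
  else ((s * deriv φ s - φ s) - (t * deriv φ t - φ t)) / (deriv φ s - deriv φ t)

lemma tangent_le (φ : ℝ → ℝ) (hdiff : Differentiable ℝ φ)
    (hmono : StrictMono (deriv φ)) (x y : ℝ) :
    deriv φ x * (y - x) ≤ φ y - φ x := by
  rcases lt_trichotomy x y with h | h | h
  · obtain ⟨c, hc, hceq⟩ := exists_deriv_eq_slope φ h hdiff.continuous.continuousOn
      (fun z _ => (hdiff z).differentiableWithinAt)
    have h1 : deriv φ x ≤ deriv φ c := (hmono.monotone hc.1.le)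
    have h2 : deriv φ c * (y - x) = φ y - φ x := by
      rw [hceq, div_mul_cancel₀ _ (sub_ne_zero.2 (ne_of_gt h))]
    nlinarith [sub_pos.2 h]
  · simp [h]
  · obtain ⟨c, hc, hceq⟩ := exists_deriv_eq_slope φ h hdiff.continuous.continuousOn
      (fun z _ => (hdiff z).differentiableWithinAt)
    have h1 : deriv φ c ≤ deriv φ x := (hmono.monotone hc.2.le)
    have h2 : deriv φ c * (x - y) = φ x - φ y := by
      rw [hceq, div_mul_cancel₀ _ (sub_ne_zero.2 (ne_of_gt h))]
    nlinarith [sub_pos.2 h]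

theorem upwind_sign_property (φ : ℝ → ℝ)
    (hconv : ConvexOn ℝ Set.univ φ) (hdiff : Differentiable ℝ φ)
    (hmono : StrictMono (deriv φ))
    (hK hL F : ℝ) :
    0 ≤ max F 0 * (phiMean φ hK hL - hK) * (deriv φ hL - deriv φ hK) ∧
    0 ≤ max (-F) 0 * (hL - phiMean φ hK hL) * (deriv φ hL - deriv φ hK) := by
  by_cases h : hK = hL
  · subst h; simp [phiMean]
  · have hd : deriv φ hK - deriv φ hL ≠ 0 := sub_ne_zero.2 (fun e => h (hmono.injective e))
    have hM : phiMean φ hK hL = ((hK * deriv φ hK - φ hK) - (hL * deriv φ hL - φ hL)) /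
        (deriv φ hK - deriv φ hL) := by simp [phiMean, h]
    have t1 := tangent_le φ hdiff hmono hL hK
    have t2 := tangent_le φ hdiff hmono hK hL
    have e1 : (phiMean φ hK hL - hK) * (deriv φ hL - deriv φ hK)
        = (φ hK - φ hL) - deriv φ hL * (hK - hL) := by
      rw [hM]; field_simp; ring
    have e2 : (hL - phiMean φ hK hL) * (deriv φ hL - deriv φ hK)
        = (φ hL - φ hK) - deriv φ hK * (hL - hK) := by
      rw [hM]; field_simp; ring
    constructor
    · rw [mul_assoc, e1]
      exact mul_nonneg (le_max_right F 0) (by linarith)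
    · rw [mul_assoc, e2]
      exact mul_nonneg (le_max_right (-F) 0) (by linarith)
end

section
/- With discrete relative entropy H₂ = Σ_K m(K)·(h_K - 1)²·f_K^∞ over a finite mesh, if f_K^∞ ≤ M^∞ for all K and a discrete Poincaré inequality Σ_K m(K)·(h_K - 1)² ≤ (C_P/ξ)·Σ_σ τ_σ·(D_σ(h-1))² holds, and if the dissipation satisfies D₂ ≥ 2·β·α·m^∞·Σ_σ τ_σ·(D_σ h)² (with f_{B,σ}^∞ ≥ β·m^∞ and a_σ ≥ α), then κ·H₂ ≤ D₂ with κ = 2·β·ξ·α·m^∞/(C_P·M^∞). -/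
theorem entropy_dissipation_poincare {ι ε : Type*} [Fintype ι] [Fintype ε]
    (m finf h : ι → ℝ) (τ D : ε → ℝ)
    (Minf minf α β ξ CP H2 D2 : ℝ)
    (hm : ∀ K, 0 ≤ m K) (hτ : ∀ σ, 0 ≤ τ σ)
    (hMinf : 0 < Minf) (hminf : 0 < minf) (hα : 0 < α) (hβ : 0 < β)
    (hξ : 0 < ξ) (hCP : 0 < CP)
    (hfinf : ∀ K, finf K ≤ Minf)
    (hH2 : H2 = ∑ K, m K * (h K - 1) ^ 2 * finf K)
    (hPoincare : ∑ K, m K * (h K - 1) ^ 2 ≤ (CP / ξ) * ∑ σ, τ σ * (D σ) ^ 2)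
    (hD2 : 2 * β * α * minf * (∑ σ, τ σ * (D σ) ^ 2) ≤ D2) :
    (2 * β * ξ * α * minf / (CP * Minf)) * H2 ≤ D2 := by
  have hS : H2 ≤ Minf * ∑ K, m K * (h K - 1) ^ 2 := by
    rw [hH2, Finset.mul_sum]
    apply Finset.sum_le_sum
    intro K _
    have h1 : 0 ≤ m K * (h K - 1) ^ 2 := mul_nonneg (hm K) (sq_nonneg _)
    calc m K * (h K - 1) ^ 2 * finf K ≤ m K * (h K - 1) ^ 2 * Minf :=
          mul_le_mul_of_nonneg_left (hfinf K) h1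
      _ = Minf * (m K * (h K - 1) ^ 2) := by ring
  have hc : 0 < 2 * β * ξ * α * minf / (CP * Minf) := by positivity
  calc (2 * β * ξ * α * minf / (CP * Minf)) * H2
      ≤ (2 * β * ξ * α * minf / (CP * Minf)) * (Minf * ∑ K, m K * (h K - 1) ^ 2) :=
        mul_le_mul_of_nonneg_left hS hc.le
    _ ≤ (2 * β * ξ * α * minf / (CP * Minf)) * (Minf * ((CP / ξ) * ∑ σ, τ σ * (D σ) ^ 2)) := by
        have : 0 ≤ 2 * β * ξ * α * minf / (CP * Minf) * Minf := by positivity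
        exact mul_le_mul_of_nonneg_left (by
          exact mul_le_mul_of_nonneg_left hPoincare hMinf.le) hc.le
    _ = 2 * β * α * minf * (∑ σ, τ σ * (D σ) ^ 2) := by
        field_simp
    _ ≤ D2 := hD2
end

section
/- For a finite-dimensional discrete Laplace steady state: if u = (u_K) over a finite strongly connected mesh satisfies Σ_{σ∈E_K} τ_σ·(u_{K,σ} - u_K) = 0 for all K, where u_{K,σ} = u_L across interior edges σ = K|L, u_{K,σ} = u_σ^D on Dirichlet edges, u_{K,σ} = u_K on Neumann edges, τ_σ > 0, and at least one Dirichlet edge exists, then min_σ u_σ^D ≤ u_K ≤ max_σ u_σ^D for all K. -/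
open Finset

lemma dmp_upper
    {ι δ : Type*} [Fintype ι] [Fintype δ] [DecidableEq ι] [Nonempty δ]
    (w : ι → ι → ℝ) (c : δ → ι) (τD : δ → ℝ) (uD : δ → ℝ) (u : ι → ℝ)
    (hw_nonneg : ∀ K L, 0 ≤ w K L)
    (hτD : ∀ e, 0 < τD e)
    (hconn : ∀ K L : ι, Relation.ReflTransGen (fun K L => 0 < w K L) K L)
    (hscheme : ∀ K, (∑ L, w K L * (u L - u K)) +
      (∑ e ∈ univ.filter (fun e => c e = K), τD e * (uD e - u K)) = 0) :
    ∀ K, u K ≤ univ.sup' univ_nonempty uD := by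
  haveI : Nonempty ι := ⟨c (Classical.arbitrary δ)⟩
  set MD := univ.sup' univ_nonempty uD with hMD
  by_contra h
  push_neg at h
  obtain ⟨K', hK'⟩ := h
  set M := univ.sup' univ_nonempty u with hM
  have hMle : ∀ L, u L ≤ M := fun L => le_sup' u (mem_univ L)
  have hMDM : MD < M := lt_of_lt_of_le hK' (hMle K')
  have hstep : ∀ K, u K = M → (∀ L, 0 < w K L → u L = M) ∧ (∀ e : δ, c e ≠ K) := by
    intro K hK
    have h1 : ∀ L ∈ (univ : Finset ι), w K L * (u L - u K) ≤ 0 :=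
      fun L _ => mul_nonpos_of_nonneg_of_nonpos (hw_nonneg K L) (by rw [hK]; linarith [hMle L])
    have h2 : ∀ e ∈ univ.filter (fun e => c e = K), τD e * (uD e - u K) < 0 := by
      intro e _
      have h3 : uD e ≤ MD := le_sup' uD (mem_univ e)
      have h4 : uD e - u K < 0 := by rw [hK]; linarith
      exact mul_neg_of_pos_of_neg (hτD e) h4
    have hS1 : (∑ L, w K L * (u L - u K)) ≤ 0 := sum_nonpos h1
    have hS2 : (∑ e ∈ univ.filter (fun e => c e = K), τD e * (uD e - u K)) ≤ 0 :=
      sum_nonpos (fun e he => (h2 e he).le)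
    have heq := hscheme K
    have hS1z : (∑ L, w K L * (u L - u K)) = 0 := by linarith
    have hS2z : (∑ e ∈ univ.filter (fun e => c e = K), τD e * (uD e - u K)) = 0 := by linarith
    constructor
    · intro L hwL
      have hz := (sum_eq_zero_iff_of_nonpos h1).mp hS1z L (mem_univ L)
      rcases mul_eq_zero.mp hz with h | h
      · exact absurd h (ne_of_gt hwL)
      · rw [hK] at h; exact sub_eq_zero.mp h
    · intro e hce
      have hmem : e ∈ univ.filter (fun e => c e = K) := mem_filter.mpr ⟨mem_univ e, hce⟩
      have hz := (sum_eq_zero_iff_of_nonpos (fun e he => (h2 e he).le)).mp hS2z e hmem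
      exact absurd hz (ne_of_lt (h2 e hmem))
  obtain ⟨K0, _, hK0⟩ := exists_mem_eq_sup' (univ_nonempty (α := ι)) u
  have hprop : ∀ {A B : ι}, Relation.ReflTransGen (fun K L => 0 < w K L) A B →
      u A = M → u B = M := by
    intro A B h
    induction h with
    | refl => exact id
    | tail hAB hBC ih => exact fun hA => (hstep _ (ih hA)).1 _ hBC
  set e0 := Classical.arbitrary δ
  have hK1 : u (c e0) = M := hprop (hconn K0 (c e0)) hK0.symm
  exact (hstep _ hK1).2 e0 rfl

theorem discrete_maximum_principle
    {ι δ : Type*} [Fintype ι] [Fintype δ] [DecidableEq ι] [Nonempty δ]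
    (w : ι → ι → ℝ) (c : δ → ι) (τD : δ → ℝ) (uD : δ → ℝ) (u : ι → ℝ)
    (hw_nonneg : ∀ K L, 0 ≤ w K L) (hw_symm : ∀ K L, w K L = w L K)
    (hτD : ∀ e, 0 < τD e)
    (hconn : ∀ K L : ι, Relation.ReflTransGen (fun K L => 0 < w K L) K L)
    (hscheme : ∀ K, (∑ L, w K L * (u L - u K)) +
      (∑ e ∈ univ.filter (fun e => c e = K), τD e * (uD e - u K)) = 0) :
    ∀ K, univ.inf' univ_nonempty uD ≤ u K ∧ u K ≤ univ.sup' univ_nonempty uD := by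
  have hupper := dmp_upper w c τD uD u hw_nonneg hτD hconn hscheme
  have hscheme' : ∀ K, (∑ L, w K L * ((fun x => -u x) L - (fun x => -u x) K)) +
      (∑ e ∈ univ.filter (fun e => c e = K),
        τD e * ((fun x => -uD x) e - (fun x => -u x) K)) = 0 := by
    intro K
    have := hscheme K
    simp only []
    have : (∑ L, w K L * (-u L - -u K)) +
        (∑ e ∈ univ.filter (fun e => c e = K), τD e * (-uD e - -u K)) =
        -((∑ L, w K L * (u L - u K)) +
          (∑ e ∈ univ.filter (fun e => c e = K), τD e * (uD e - u K))) := by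
      rw [neg_add, ← sum_neg_distrib, ← sum_neg_distrib]
      congr 1 <;> apply sum_congr rfl <;> intro x _ <;> ring
    rw [this, hscheme K, neg_zero]
  have hlower := dmp_upper w c τD (fun x => -uD x) (fun x => -u x)
    hw_nonneg hτD hconn hscheme'
  intro K
  refine ⟨?_, hupper K⟩
  have h := hlower K
  obtain ⟨e, _, he⟩ := exists_mem_eq_sup' (univ_nonempty (α := δ)) (fun x => -uD x)
  rw [he] at h
  have : uD e ≤ u K := by simpa using h
  exact le_trans (inf'_le uD (mem_univ e)) this
end
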